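/- arXiv:2008.11892 — 3 statements merged into one kernel-verified Lean document; each statement's English description precedes it below -/
import Mathlib

section
/- The partial moment coefficients c_{k,j}, defined recursively by c_{0,0} = 1, c_{0,j} = 0 for j ≥ 1, and c_{k,j} = Σ_{m=0}^{j+1} c_{k-1,m} κ_{j+1-m} for k ≥ 1 (with κ_0 := 1), satisfy for each k ≥ 1 the combinatorial identity c_{k,j} = Σ_{π ∈ NC(k+j, j)} Π_{S ∈ π} κ_{|S|}, where NC(k+j, j) is the set of non-crossing partitions of {1,...,k+j} in which no block is contained in {1,...,j}. -/
open Finset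
open scoped Classical

/-- A finite family `P` of subsets of `Fin n` is a non-crossing partition of `{0,…,n-1}`:
every element lies in exactly one block, no block is empty, and there is no crossing
`a < b < c < d` with `a, c` in one block and `b, d` in a different block. -/
def IsNCPartition {n : ℕ} (P : Finset (Finset (Fin n))) : Prop :=
  (∀ i : Fin n, ∃! S : Finset (Fin n), S ∈ P ∧ i ∈ S) ∧ (∅ : Finset (Fin n)) ∉ P ∧
    ∀ S ∈ P, ∀ T ∈ P, ∀ a ∈ S, ∀ b ∈ T, ∀ c ∈ S, ∀ d ∈ T,
      a < b → b < c → c < d → S = T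

/-- `NC(n, ℓ)`: the non-crossing partitions of `{0,…,n-1}` in which no block is contained in
the first `ℓ` elements `{0,…,ℓ-1}` (i.e. every block contains an element `≥ ℓ`). -/
noncomputable def NCPrefix (n ℓ : ℕ) : Finset (Finset (Finset (Fin n))) :=
  Finset.univ.filter fun P => IsNCPartition P ∧ ∀ S ∈ P, ∃ a ∈ S, ℓ ≤ (a : ℕ)

/-- The partial moment coefficients `c_{k,j}`, defined by `c_{0,0} = 1`, `c_{0,j} = 0` for
`j ≥ 1`, and `c_{k,j} = Σ_{m=0}^{j+1} c_{k-1,m} κ_{j+1-m}` for `k ≥ 1`. -/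
noncomputable def pmc (κ : ℕ → ℝ) : ℕ → ℕ → ℝ
  | 0, j => if j = 0 then 1 else 0
  | k + 1, j => ∑ m ∈ range (j + 2), pmc κ k m * κ (j + 1 - m)

namespace PMCAux

lemma mem_NCPrefix {n ℓ : ℕ} {P : Finset (Finset (Fin n))} :
    P ∈ NCPrefix n ℓ ↔ IsNCPartition P ∧ ∀ S ∈ P, ∃ a ∈ S, ℓ ≤ (a : ℕ) := by
  simp [NCPrefix]

lemma block_unique {n : ℕ} {P : Finset (Finset (Fin n))} (h : IsNCPartition P)
    {x : Fin n} {S T : Finset (Fin n)} (hS : S ∈ P) (hxS : x ∈ S) (hT : T ∈ P)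
    (hxT : x ∈ T) : S = T := by
  obtain ⟨U, -, hU⟩ := h.1 x
  rw [hU S ⟨hS, hxS⟩, hU T ⟨hT, hxT⟩]

variable {k j m : ℕ}

def upF (k j m : ℕ) (hm : m ≤ j) (i : Fin (k + m)) : Fin (k + 1 + j) :=
  if _h : (i : ℕ) < m then ⟨i, by omega⟩
  else ⟨(i : ℕ) + (j + 1 - m), by have := i.2; omega⟩

lemma upF_coe (hm : m ≤ j) (i : Fin (k + m)) :
    ((upF k j m hm i : ℕ)) = if (i : ℕ) < m then (i : ℕ) else (i : ℕ) + (j + 1 - m) := by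
  unfold upF; split <;> rfl

lemma upF_strictMono (hm : m ≤ j) : StrictMono (upF k j m hm) := by
  intro a b hab
  have h := Fin.lt_def.mp hab
  rw [Fin.lt_def, upF_coe hm, upF_coe hm]
  split <;> split <;> omega

lemma upF_inj (hm : m ≤ j) : Function.Injective (upF k j m hm) :=
  (upF_strictMono hm).injective

lemma upF_lt_iff (hm : m ≤ j) {a b : Fin (k + m)} :
    upF k j m hm a < upF k j m hm b ↔ a < b :=
  (upF_strictMono hm).lt_iff_lt

def iblk (k j m : ℕ) : Finset (Fin (k + 1 + j)) :=
  univ.filter fun x => m ≤ (x : ℕ) ∧ (x : ℕ) ≤ j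

lemma mem_iblk {x : Fin (k + 1 + j)} : x ∈ iblk k j m ↔ m ≤ (x : ℕ) ∧ (x : ℕ) ≤ j := by
  simp [iblk]

def jF (k j : ℕ) : Fin (k + 1 + j) := ⟨j, by omega⟩

lemma jF_mem_iblk (hm : m ≤ j) : jF k j ∈ iblk k j m := mem_iblk.mpr ⟨hm, le_refl j⟩

lemma card_iblk (hm : m ≤ j) : (iblk k j m).card = j + 1 - m := by
  have : iblk k j m = Finset.Icc (⟨m, by omega⟩ : Fin (k + 1 + j)) ⟨j, by omega⟩ := by
    ext x
    rw [mem_iblk, Finset.mem_Icc]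
    constructor
    · rintro ⟨h1, h2⟩; exact ⟨h1, h2⟩
    · rintro ⟨h1, h2⟩; exact ⟨h1, h2⟩
  rw [this, Fin.card_Icc]

lemma upF_not_mem_iblk (hm : m ≤ j) (i : Fin (k + m)) : upF k j m hm i ∉ iblk k j m := by
  rw [mem_iblk, upF_coe hm]; split <;> omega

lemma exists_upF (hm : m ≤ j) {x : Fin (k + 1 + j)} (hx : x ∉ iblk k j m) :
    ∃ i, upF k j m hm i = x := by
  rw [mem_iblk] at hx
  push_neg at hx
  by_cases h : (x : ℕ) < m
  · exact ⟨⟨x, by omega⟩, by rw [Fin.ext_iff, upF_coe hm]; simp only; split <;> omega⟩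
  · have hxj : j < (x : ℕ) := hx (by omega)
    refine ⟨⟨(x : ℕ) - (j + 1 - m), by have := x.2; omega⟩, ?_⟩
    rw [Fin.ext_iff, upF_coe hm]
    simp only; split <;> omega

end PMCAux

namespace PMCAux

variable {k j m : ℕ}

def upImg (hm : m ≤ j) (S : Finset (Fin (k + m))) : Finset (Fin (k + 1 + j)) :=
  S.image (upF k j m hm)

lemma mem_upImg (hm : m ≤ j) {S : Finset (Fin (k + m))} {x : Fin (k + 1 + j)} :
    x ∈ upImg hm S ↔ ∃ i ∈ S, upF k j m hm i = x := Finset.mem_image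

def preB (hm : m ≤ j) (S : Finset (Fin (k + 1 + j))) : Finset (Fin (k + m)) :=
  univ.filter fun i => upF k j m hm i ∈ S

lemma mem_preB (hm : m ≤ j) {S : Finset (Fin (k + 1 + j))} {i : Fin (k + m)} :
    i ∈ preB hm S ↔ upF k j m hm i ∈ S := by simp [preB]

lemma preB_upImg (hm : m ≤ j) (S : Finset (Fin (k + m))) : preB hm (upImg hm S) = S := by
  ext i
  rw [mem_preB hm, mem_upImg hm]
  constructor
  · rintro ⟨i', hi', h⟩
    rwa [← upF_inj hm h]
  · intro h; exact ⟨i, h, rfl⟩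

lemma upImg_preB (hm : m ≤ j) {S : Finset (Fin (k + 1 + j))}
    (hS : ∀ x ∈ S, x ∉ iblk k j m) : upImg hm (preB hm S) = S := by
  ext x
  rw [mem_upImg hm]
  constructor
  · rintro ⟨i, hi, rfl⟩
    exact (mem_preB hm).mp hi
  · intro hx
    obtain ⟨i, rfl⟩ := exists_upF hm (hS x hx)
    exact ⟨i, (mem_preB hm).mpr hx, rfl⟩

def UU (hm : m ≤ j) (P' : Finset (Finset (Fin (k + m)))) : Finset (Finset (Fin (k + 1 + j))) :=
  insert (iblk k j m) (P'.image (upImg hm))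

def DD (hm : m ≤ j) (P : Finset (Finset (Fin (k + 1 + j)))) : Finset (Finset (Fin (k + m))) :=
  (P.erase (iblk k j m)).image (preB hm)

lemma iblk_not_mem_image (hm : m ≤ j) (P' : Finset (Finset (Fin (k + m)))) :
    iblk k j m ∉ P'.image (upImg hm) := by
  rw [Finset.mem_image]
  rintro ⟨S, -, hS⟩
  have h1 : jF k j ∈ upImg hm S := hS.symm ▸ jF_mem_iblk hm
  obtain ⟨i, -, hi⟩ := (mem_upImg hm).mp h1
  exact upF_not_mem_iblk hm i (hi.symm ▸ jF_mem_iblk hm)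

lemma disj_of_mem_erase {P : Finset (Finset (Fin (k + 1 + j)))} (hP : IsNCPartition P)
    (hblk : iblk k j m ∈ P) {S : Finset (Fin (k + 1 + j))}
    (hS : S ∈ P.erase (iblk k j m)) : ∀ x ∈ S, x ∉ iblk k j m := by
  intro x hxS hxI
  exact (Finset.ne_of_mem_erase hS)
    (block_unique hP (Finset.mem_of_mem_erase hS) hxS hblk hxI)

noncomputable def cls (j : ℕ) {n : ℕ} (P : Finset (Finset (Fin n))) : ℕ :=
  if ∃ S ∈ P, (∃ a ∈ S, Fin.val a = j) ∧ ∃ b ∈ S, j < Fin.val b then j + 1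
  else (P.filter fun S => ∃ a ∈ S, Fin.val a = j).sup fun S => j + 1 - S.card

lemma cls_le {n : ℕ} (j : ℕ) (P : Finset (Finset (Fin n))) : cls j P ≤ j + 1 := by
  unfold cls; split
  · exact le_refl _
  · exact Finset.sup_le fun S _ => Nat.sub_le _ _

lemma cls_eq_of_iblk_mem (hm : m ≤ j) {P : Finset (Finset (Fin (k + 1 + j)))}
    (hpart : IsNCPartition P) (hblk : iblk k j m ∈ P) : cls j P = m := by
  have hfil : (P.filter fun S => ∃ a ∈ S, Fin.val a = j) = {iblk k j m} := by
    ext S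
    rw [Finset.mem_filter, Finset.mem_singleton]
    constructor
    · rintro ⟨hSP, a, haS, haj⟩
      have ha : a = jF k j := Fin.ext haj
      exact block_unique hpart hSP (ha ▸ haS) hblk (jF_mem_iblk hm)
    · rintro rfl
      exact ⟨hblk, jF k j, jF_mem_iblk hm, rfl⟩
  have hcond : ¬ ∃ S ∈ P, (∃ a ∈ S, Fin.val a = j) ∧ ∃ b ∈ S, j < Fin.val b := by
    rintro ⟨S, hSP, ⟨a, haS, haj⟩, b, hbS, hbj⟩
    have ha : a = jF k j := Fin.ext haj
    have hSB : S = iblk k j m :=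
      block_unique hpart hSP (ha ▸ haS) hblk (jF_mem_iblk hm)
    have := (mem_iblk.mp (hSB ▸ hbS)).2
    omega
  unfold cls
  rw [if_neg hcond, hfil, Finset.sup_singleton, card_iblk hm]
  omega

end PMCAux

namespace PMCAux

variable {k j m : ℕ}

lemma UU_mem (hm : m ≤ j) {P' : Finset (Finset (Fin (k + m)))}
    (hP' : P' ∈ NCPrefix (k + m) m) : UU hm P' ∈ NCPrefix (k + 1 + j) j := by
  rw [mem_NCPrefix] at hP' ⊢
  obtain ⟨hpart, hpre⟩ := hP'
  obtain ⟨hcov, hne, hcr⟩ := hpart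
  refine ⟨⟨?_, ?_, ?_⟩, ?_⟩
  · intro x
    by_cases hx : x ∈ iblk k j m
    · refine ⟨iblk k j m, ⟨Finset.mem_insert_self _ _, hx⟩, ?_⟩
      rintro T ⟨hT, hxT⟩
      rcases Finset.mem_insert.mp hT with rfl | hT
      · rfl
      · exfalso
        obtain ⟨S, -, rfl⟩ := Finset.mem_image.mp hT
        obtain ⟨i, -, rfl⟩ := (mem_upImg hm).mp hxT
        exact upF_not_mem_iblk hm i hx
    · obtain ⟨i, rfl⟩ := exists_upF hm hx
      obtain ⟨S, ⟨hSP, hiS⟩, hSu⟩ := hcov i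
      refine ⟨upImg hm S,
        ⟨Finset.mem_insert_of_mem (Finset.mem_image_of_mem _ hSP),
         (mem_upImg hm).mpr ⟨i, hiS, rfl⟩⟩, ?_⟩
      rintro T ⟨hT, hxT⟩
      rcases Finset.mem_insert.mp hT with rfl | hT
      · exact absurd hxT hx
      · obtain ⟨T', hT'P, rfl⟩ := Finset.mem_image.mp hT
        obtain ⟨i', hi'T', hi'⟩ := (mem_upImg hm).mp hxT
        have : i' = i := upF_inj hm hi'
        subst this
        rw [hSu T' ⟨hT'P, hi'T'⟩]
  · intro h
    rcases Finset.mem_insert.mp h with h | h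
    · exact absurd (jF_mem_iblk hm) (h ▸ Finset.notMem_empty _)
    · obtain ⟨S, hSP, hS⟩ := Finset.mem_image.mp h
      obtain ⟨a, haS, -⟩ := hpre S hSP
      exact absurd ((mem_upImg hm).mpr ⟨a, haS, rfl⟩) (hS.symm ▸ Finset.notMem_empty _)
  · intro S hS T hT a ha b hb c hc d hd hab hbc hcd
    rcases Finset.mem_insert.mp hS with rfl | hS <;>
      rcases Finset.mem_insert.mp hT with rfl | hT
    · rfl
    · exfalso
      obtain ⟨T', -, rfl⟩ := Finset.mem_image.mp hT
      obtain ⟨ib, -, rfl⟩ := (mem_upImg hm).mp hb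
      have h1 := (mem_iblk.mp ha).1
      have h2 := (mem_iblk.mp hc).2
      have h3 := upF_not_mem_iblk hm ib
      rw [mem_iblk] at h3
      have h4 := Fin.lt_def.mp hab
      have h5 := Fin.lt_def.mp hbc
      omega
    · exfalso
      obtain ⟨S', -, rfl⟩ := Finset.mem_image.mp hS
      obtain ⟨ic, -, rfl⟩ := (mem_upImg hm).mp hc
      have h1 := (mem_iblk.mp hb).1
      have h2 := (mem_iblk.mp hd).2
      have h3 := upF_not_mem_iblk hm ic
      rw [mem_iblk] at h3
      have h4 := Fin.lt_def.mp hbc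
      have h5 := Fin.lt_def.mp hcd
      omega
    · obtain ⟨S', hS'P, rfl⟩ := Finset.mem_image.mp hS
      obtain ⟨T', hT'P, rfl⟩ := Finset.mem_image.mp hT
      obtain ⟨ia, hia, rfl⟩ := (mem_upImg hm).mp ha
      obtain ⟨ib, hib, rfl⟩ := (mem_upImg hm).mp hb
      obtain ⟨ic, hic, rfl⟩ := (mem_upImg hm).mp hc
      obtain ⟨id', hid, rfl⟩ := (mem_upImg hm).mp hd
      rw [hcr S' hS'P T' hT'P ia hia ib hib ic hic id' hid
        ((upF_lt_iff hm).mp hab) ((upF_lt_iff hm).mp hbc) ((upF_lt_iff hm).mp hcd)]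
  · intro S hS
    rcases Finset.mem_insert.mp hS with rfl | hS
    · exact ⟨jF k j, jF_mem_iblk hm, le_refl j⟩
    · obtain ⟨S', hS'P, rfl⟩ := Finset.mem_image.mp hS
      obtain ⟨a, haS, ham⟩ := hpre S' hS'P
      refine ⟨upF k j m hm a, (mem_upImg hm).mpr ⟨a, haS, rfl⟩, ?_⟩
      rw [upF_coe hm]
      split <;> omega

lemma DD_mem (hm : m ≤ j) {P : Finset (Finset (Fin (k + 1 + j)))}
    (hP : P ∈ NCPrefix (k + 1 + j) j) (hblk : iblk k j m ∈ P) :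
    DD hm P ∈ NCPrefix (k + m) m := by
  rw [mem_NCPrefix] at hP ⊢
  obtain ⟨hpart, hpre⟩ := hP
  have hcov := hpart.1
  have hcr := hpart.2.2
  refine ⟨⟨?_, ?_, ?_⟩, ?_⟩
  · intro i
    have hx := upF_not_mem_iblk hm i
    obtain ⟨S, ⟨hSP, hxS⟩, hSu⟩ := hcov (upF k j m hm i)
    have hSI : S ≠ iblk k j m := fun h => hx (h ▸ hxS)
    refine ⟨preB hm S, ⟨Finset.mem_image_of_mem _ (Finset.mem_erase.mpr ⟨hSI, hSP⟩),
      (mem_preB hm).mpr hxS⟩, ?_⟩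
    rintro T ⟨hT, hiT⟩
    obtain ⟨T₀, hT₀, rfl⟩ := Finset.mem_image.mp hT
    rw [hSu T₀ ⟨Finset.mem_of_mem_erase hT₀, (mem_preB hm).mp hiT⟩]
  · intro h
    obtain ⟨S, hS, hS0⟩ := Finset.mem_image.mp h
    obtain ⟨a, haS, -⟩ := hpre S (Finset.mem_of_mem_erase hS)
    have hna := disj_of_mem_erase hpart hblk hS a haS
    obtain ⟨i, rfl⟩ := exists_upF hm hna
    exact absurd ((mem_preB hm).mpr haS) (hS0.symm ▸ Finset.notMem_empty _)
  · intro S hS T hT a ha b hb c hc d hd hab hbc hcd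
    obtain ⟨S₀, hS₀, rfl⟩ := Finset.mem_image.mp hS
    obtain ⟨T₀, hT₀, rfl⟩ := Finset.mem_image.mp hT
    rw [hcr S₀ (Finset.mem_of_mem_erase hS₀) T₀ (Finset.mem_of_mem_erase hT₀)
      _ ((mem_preB hm).mp ha) _ ((mem_preB hm).mp hb) _ ((mem_preB hm).mp hc)
      _ ((mem_preB hm).mp hd) ((upF_lt_iff hm).mpr hab) ((upF_lt_iff hm).mpr hbc)
      ((upF_lt_iff hm).mpr hcd)]
  · intro S hS
    obtain ⟨S₀, hS₀, rfl⟩ := Finset.mem_image.mp hS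
    obtain ⟨a, haS, haj⟩ := hpre S₀ (Finset.mem_of_mem_erase hS₀)
    have hna := disj_of_mem_erase hpart hblk hS₀ a haS
    rw [mem_iblk] at hna
    obtain ⟨i, rfl⟩ := exists_upF hm (by rw [mem_iblk]; exact hna)
    refine ⟨i, (mem_preB hm).mpr haS, ?_⟩
    have := upF_coe hm i
    by_cases h : (i : ℕ) < m
    · rw [if_pos h] at this; omega
    · omega

lemma UU_DD (hm : m ≤ j) {P : Finset (Finset (Fin (k + 1 + j)))} (hP : IsNCPartition P)
    (hblk : iblk k j m ∈ P) : UU hm (DD hm P) = P := by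
  have h1 : Set.EqOn (upImg hm ∘ preB hm) id ↑(P.erase (iblk k j m)) := fun S hS =>
    upImg_preB hm (disj_of_mem_erase hP hblk hS)
  unfold UU DD
  rw [Finset.image_image, Finset.image_congr h1, Finset.image_id,
    Finset.insert_erase hblk]

lemma DD_UU (hm : m ≤ j) (P' : Finset (Finset (Fin (k + m)))) : DD hm (UU hm P') = P' := by
  have h1 : Set.EqOn (preB hm ∘ upImg hm) id (↑P' : Set (Finset (Fin (k + m)))) := fun S _ => preB_upImg hm S
  unfold UU DD
  rw [Finset.erase_insert (iblk_not_mem_image hm P'), Finset.image_image,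
    Finset.image_congr h1, Finset.image_id]

lemma prod_UU (κ : ℕ → ℝ) (hm : m ≤ j) (P' : Finset (Finset (Fin (k + m)))) :
    ∏ S ∈ UU hm P', κ S.card = κ (j + 1 - m) * ∏ S ∈ P', κ S.card := by
  unfold UU
  rw [Finset.prod_insert (iblk_not_mem_image hm P'), card_iblk hm]
  congr 1
  have hinj : ∀ S ∈ P', ∀ T ∈ P', upImg hm S = upImg hm T → S = T := by
    intro S _ T _ h
    have := congrArg (preB hm) h
    rwa [preB_upImg, preB_upImg] at this
  rw [Finset.prod_image hinj]
  exact Finset.prod_congr rfl fun S _ =>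
    congrArg κ (Finset.card_image_of_injective S (upF_inj hm))

end PMCAux

namespace PMCAux

variable {k j m : ℕ}

lemma iblk_mem_of_cls (hm : m ≤ j) {P : Finset (Finset (Fin (k + 1 + j)))}
    (hP : P ∈ NCPrefix (k + 1 + j) j) (hc : cls j P = m) : iblk k j m ∈ P := by
  rw [mem_NCPrefix] at hP
  obtain ⟨hpart, hpre⟩ := hP
  obtain ⟨B, ⟨hBP, hjB⟩, -⟩ := hpart.1 (jF k j)
  have hnobig : ∀ b ∈ B, (b : ℕ) ≤ j := by
    by_contra h
    push_neg at h
    obtain ⟨b, hbB, hbj⟩ := h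
    have : cls j P = j + 1 := by
      unfold cls
      rw [if_pos ⟨B, hBP, ⟨jF k j, hjB, rfl⟩, b, hbB, hbj⟩]
    omega
  have hfil : (P.filter fun S => ∃ a ∈ S, Fin.val a = j) = {B} := by
    ext S
    rw [Finset.mem_filter, Finset.mem_singleton]
    constructor
    · rintro ⟨hSP, a, haS, haj⟩
      exact block_unique hpart hSP ((Fin.ext haj : a = jF k j) ▸ haS) hBP hjB
    · rintro rfl
      exact ⟨hBP, jF k j, hjB, rfl⟩
  have hcond : ¬ ∃ S ∈ P, (∃ a ∈ S, Fin.val a = j) ∧ ∃ b ∈ S, j < Fin.val b := by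
    rintro ⟨S, hSP, ⟨a, haS, haj⟩, b, hbS, hbj⟩
    have hSB : S = B :=
      block_unique hpart hSP ((Fin.ext haj : a = jF k j) ▸ haS) hBP hjB
    exact absurd hbj (not_lt.mpr (hnobig b (hSB ▸ hbS)))
  have hcls : cls j P = j + 1 - B.card := by
    unfold cls
    rw [if_neg hcond, hfil, Finset.sup_singleton]
  have hBne : B.Nonempty := ⟨jF k j, hjB⟩
  set a0 : Fin (k + 1 + j) := B.min' hBne with ha0def
  have ha0B : a0 ∈ B := Finset.min'_mem _ _
  have ha0j : (a0 : ℕ) ≤ j := hnobig _ ha0B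
  have hBeq : B = iblk k j (a0 : ℕ) := by
    ext x
    rw [mem_iblk]
    constructor
    · intro hxB
      exact ⟨Finset.min'_le _ _ hxB, hnobig _ hxB⟩
    · rintro ⟨h1, h2⟩
      by_contra hxB
      obtain ⟨T, ⟨hTP, hxT⟩, -⟩ := hpart.1 x
      have hTB : T ≠ B := fun h => hxB (h ▸ hxT)
      obtain ⟨c, hcT, hcj⟩ := hpre T hTP
      have hcj' : j < (c : ℕ) := by
        rcases lt_or_eq_of_le hcj with h | h
        · exact h
        · exact absurd (block_unique hpart hTP ((Fin.ext h.symm : c = jF k j) ▸ hcT)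
            hBP hjB) hTB
      have h1' : a0 < x := by
        rw [Fin.lt_def]
        rcases lt_or_eq_of_le h1 with h | h
        · exact h
        · exact absurd (((Fin.ext h.symm : x = a0) : x = a0) ▸ hxB) (fun hh => hh ha0B)
      have h2' : x < jF k j := by
        rw [Fin.lt_def]
        rcases lt_or_eq_of_le h2 with h | h
        · exact h
        · exact absurd ((Fin.ext h : x = jF k j).symm ▸ hjB) hxB
      have hEq := hpart.2.2 B hBP T hTP a0 ha0B x hxT (jF k j) hjB c hcT h1' h2'
        (Fin.lt_def.mpr hcj')
      exact absurd (hEq.symm ▸ hxT) hxB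
  have hcard : B.card = j + 1 - (a0 : ℕ) := by rw [hBeq, card_iblk ha0j]
  have hma : m = (a0 : ℕ) := by omega
  rw [hma, ← hBeq]
  exact hBP

lemma fiber_top_eq (k j : ℕ) :
    (NCPrefix (k + 1 + j) j).filter (fun P => cls j P = j + 1) =
      NCPrefix (k + 1 + j) (j + 1) := by
  ext P
  rw [Finset.mem_filter]
  constructor
  · rintro ⟨hP, hc⟩
    rw [mem_NCPrefix] at hP ⊢
    obtain ⟨hpart, hpre⟩ := hP
    refine ⟨hpart, ?_⟩
    have hcond : ∃ S ∈ P, (∃ a ∈ S, Fin.val a = j) ∧ ∃ b ∈ S, j < Fin.val b := by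
      by_contra h
      unfold cls at hc
      rw [if_neg h] at hc
      have hle : (P.filter fun S => ∃ a ∈ S, Fin.val a = j).sup
          (fun S => j + 1 - S.card) ≤ j := by
        apply Finset.sup_le
        intro S hS
        obtain ⟨-, a, haS, -⟩ := Finset.mem_filter.mp hS
        have : 0 < S.card := Finset.card_pos.mpr ⟨a, haS⟩
        omega
      omega
    obtain ⟨B, hBP, ⟨a, haB, haj⟩, b, hbB, hbj⟩ := hcond
    have haB' : jF k j ∈ B := (Fin.ext haj : a = jF k j) ▸ haB
    intro S hSP
    by_cases hSB : S = B
    · exact ⟨b, hSB.symm ▸ hbB, hbj⟩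
    · obtain ⟨a', ha'S, ha'j⟩ := hpre S hSP
      refine ⟨a', ha'S, ?_⟩
      rcases lt_or_eq_of_le ha'j with h | h
      · exact h
      · exact absurd (block_unique hpart hSP ((Fin.ext h.symm : a' = jF k j) ▸ ha'S)
          hBP haB') hSB
  · intro hP
    rw [mem_NCPrefix] at hP
    obtain ⟨hpart, hpre⟩ := hP
    have hP' : P ∈ NCPrefix (k + 1 + j) j := mem_NCPrefix.mpr
      ⟨hpart, fun S hS => by obtain ⟨a, haS, ha⟩ := hpre S hS; exact ⟨a, haS, by omega⟩⟩
    refine ⟨hP', ?_⟩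
    obtain ⟨B, ⟨hBP, hjB⟩, -⟩ := hpart.1 (jF k j)
    obtain ⟨b, hbB, hbj⟩ := hpre B hBP
    unfold cls
    rw [if_pos ⟨B, hBP, ⟨jF k j, hjB, rfl⟩, b, hbB, by omega⟩]

lemma fiber_sum (κ : ℕ → ℝ) (hm : m ≤ j) :
    ∑ P ∈ (NCPrefix (k + 1 + j) j).filter (fun P => cls j P = m), ∏ S ∈ P, κ S.card =
      (∑ P' ∈ NCPrefix (k + m) m, ∏ S ∈ P', κ S.card) * κ (j + 1 - m) := by
  rw [Finset.sum_mul]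
  refine Finset.sum_bij' (fun P _ => DD hm P) (fun P' _ => UU hm P') ?_ ?_ ?_ ?_ ?_
  · intro P hP
    obtain ⟨hP, hc⟩ := Finset.mem_filter.mp hP
    exact DD_mem hm hP (iblk_mem_of_cls hm hP hc)
  · intro P' hP'
    refine Finset.mem_filter.mpr ⟨UU_mem hm hP', ?_⟩
    exact cls_eq_of_iblk_mem hm (mem_NCPrefix.mp (UU_mem hm hP')).1
      (Finset.mem_insert_self _ _)
  · intro P hP
    obtain ⟨hP, hc⟩ := Finset.mem_filter.mp hP
    exact UU_DD hm (mem_NCPrefix.mp hP).1 (iblk_mem_of_cls hm hP hc)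
  · intro P' _
    exact DD_UU hm P'
  · intro P hP
    obtain ⟨hP, hc⟩ := Finset.mem_filter.mp hP
    have hblk := iblk_mem_of_cls hm hP hc
    have := prod_UU κ hm (DD hm P)
    rw [UU_DD hm (mem_NCPrefix.mp hP).1 hblk] at this
    rw [this, mul_comm]

end PMCAux

namespace PMCAux

lemma pmc_eq_aux (κ : ℕ → ℝ) (hκ0 : κ 0 = 1) :
    ∀ k j : ℕ, pmc κ k j = ∑ P ∈ NCPrefix (k + j) j, ∏ S ∈ P, κ S.card := by
  intro k
  induction k with
  | zero =>
    intro j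
    cases j with
    | zero =>
      have h0 : NCPrefix (0 + 0) 0 = {(∅ : Finset (Finset (Fin (0 + 0))))} := by
        ext P
        rw [mem_NCPrefix, Finset.mem_singleton]
        constructor
        · rintro ⟨⟨-, hne, -⟩, -⟩
          rw [Finset.eq_empty_iff_forall_notMem]
          intro S hS
          have : S = ∅ := Finset.eq_empty_iff_forall_notMem.mpr fun x _ => x.elim0
          exact hne (this ▸ hS)
        · rintro rfl
          refine ⟨⟨fun i => i.elim0, Finset.notMem_empty _, ?_⟩, ?_⟩
          · intro S hS; exact absurd hS (Finset.notMem_empty _)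
          · intro S hS; exact absurd hS (Finset.notMem_empty _)
      rw [h0]
      simp [pmc]
    | succ j =>
      have h0 : NCPrefix (0 + (j + 1)) (j + 1) = ∅ := by
        rw [Finset.eq_empty_iff_forall_notMem]
        intro P hP
        rw [mem_NCPrefix] at hP
        obtain ⟨⟨hcov, -, -⟩, hpre⟩ := hP
        obtain ⟨S, ⟨hSP, -⟩, -⟩ := hcov ⟨0, by omega⟩
        obtain ⟨a, -, haj⟩ := hpre S hSP
        have := a.2
        omega
      rw [h0]
      simp [pmc]
  | succ k IH =>
    intro j
    have hL : pmc κ (k + 1) j = ∑ m ∈ range (j + 2), pmc κ k m * κ (j + 1 - m) := rfl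
    have hsplit : ∑ P ∈ NCPrefix (k + 1 + j) j, ∏ S ∈ P, κ S.card =
        ∑ m ∈ range (j + 2), ∑ P ∈ (NCPrefix (k + 1 + j) j).filter
          (fun P => cls j P = m), ∏ S ∈ P, κ S.card :=
      (Finset.sum_fiberwise_of_maps_to
        (fun P _ => Finset.mem_range.mpr (by have := cls_le j P; omega)) _).symm
    rw [hL, hsplit]
    apply Finset.sum_congr rfl
    intro m hm
    rw [Finset.mem_range] at hm
    by_cases hmj : m ≤ j
    · rw [fiber_sum κ hmj, IH m]
    · have hmj' : m = j + 1 := by omega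
      subst hmj'
      rw [fiber_top_eq, Nat.sub_self, hκ0, mul_one, IH (j + 1),
        show k + (j + 1) = k + 1 + j from by omega]

end PMCAux


/-- **Combinatorial interpretation of the partial moment coefficients:**
for `k ≥ 1`, `c_{k,j} = Σ_{π ∈ NC(k+j, j)} Π_{S ∈ π} κ_{|S|}`, with the convention `κ_0 = 1`. -/
theorem pmc_eq_sum_noncrossing (κ : ℕ → ℝ) (hκ0 : κ 0 = 1) (k j : ℕ) (hk : 1 ≤ k) :
    pmc κ k j = ∑ P ∈ NCPrefix (k + j) j, ∏ S ∈ P, κ S.card :=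
  PMCAux.pmc_eq_aux κ hκ0 k j
end

section
/- Let Δ, Σ be symmetric t×t real matrices, Φ a strictly lower-triangular t×t matrix, and define Θ^{(j)} = Σ_{i=0}^{j} Φ^i Δ (Φ^{j-i})^T, B = (Σ_{j≥0} κ_{j+1} Φ^j)^T, and Σ = Σ_{j≥0} κ_{j+2} Θ^{(j)} (all sums finite since Φ^t = 0). Then L^{(1)} := Σ_{j≥0} κ_{j+1} Θ^{(j)} satisfies L^{(1)} = Δ B + Φ Σ = B^T Δ + Σ Φ^T. -/
open Matrix Finset

/-- `Θ^{(j)} = Σ_{i=0}^{j} Φ^i Δ (Φ^{j-i})ᵀ`. -/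
noncomputable def ThetaMat (t : ℕ) (Δ Φ : Matrix (Fin t) (Fin t) ℝ) (j : ℕ) :
    Matrix (Fin t) (Fin t) ℝ :=
  ∑ i ∈ range (j + 1), Φ ^ i * Δ * (Φ ^ (j - i))ᵀ

/-- `B = (Σ_{j≥0} κ_{j+1} Φ^j)ᵀ`; the series is finite since `Φ^j = 0` for `j ≥ t`. -/
noncomputable def BMat (t : ℕ) (κ : ℕ → ℝ) (Φ : Matrix (Fin t) (Fin t) ℝ) :
    Matrix (Fin t) (Fin t) ℝ :=
  (∑ j ∈ range t, κ (j + 1) • Φ ^ j)ᵀ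

/-- `Σ = Σ_{j≥0} κ_{j+2} Θ^{(j)}`; the series is finite since `Θ^{(j)} = 0` for `j ≥ 2t-1`. -/
noncomputable def SigmaMat (t : ℕ) (κ : ℕ → ℝ) (Δ Φ : Matrix (Fin t) (Fin t) ℝ) :
    Matrix (Fin t) (Fin t) ℝ :=
  ∑ j ∈ range (2 * t), κ (j + 2) • ThetaMat t Δ Φ j

/-- `L^{(1)} = Σ_{j≥0} κ_{j+1} Θ^{(j)}`. -/
noncomputable def LMatOne (t : ℕ) (κ : ℕ → ℝ) (Δ Φ : Matrix (Fin t) (Fin t) ℝ) :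
    Matrix (Fin t) (Fin t) ℝ :=
  ∑ j ∈ range (2 * t), κ (j + 1) • ThetaMat t Δ Φ j

section aux

variable {t : ℕ} {κ : ℕ → ℝ} {Δ Φ : Matrix (Fin t) (Fin t) ℝ}

lemma pow_apply_zero (hΦ : ∀ i j : Fin t, i ≤ j → Φ i j = 0) :
    ∀ (k : ℕ) (i j : Fin t), (i : ℕ) < (j : ℕ) + k → (Φ ^ k) i j = 0 := by
  intro k
  induction k with
  | zero =>
    intro i j h
    simp only [Nat.add_zero] at h
    rw [pow_zero]
    exact Matrix.one_apply_ne (by intro hc; subst hc; omega)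
  | succ k ih =>
    intro i j h
    rw [pow_succ, Matrix.mul_apply]
    apply Finset.sum_eq_zero
    intro m _
    rcases le_or_gt m j with hm | hm
    · rw [hΦ m j hm, mul_zero]
    · rw [ih i m (by have : (j : ℕ) < (m : ℕ) := hm; omega), zero_mul]

lemma pow_zero_of_le (hΦ : ∀ i j : Fin t, i ≤ j → Φ i j = 0) {k : ℕ} (hk : t ≤ k) :
    Φ ^ k = 0 := by
  ext i j
  rw [pow_apply_zero hΦ k i j (by have := i.isLt; omega)]
  rfl

lemma theta_zero : ThetaMat t Δ Φ 0 = Δ := by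
  simp [ThetaMat]

lemma theta_rec (j : ℕ) :
    ThetaMat t Δ Φ (j + 1) = Δ * (Φ ^ (j + 1))ᵀ + Φ * ThetaMat t Δ Φ j := by
  rw [ThetaMat, Finset.sum_range_succ', add_comm]
  simp only [pow_zero, one_mul, Nat.succ_sub_succ, Nat.sub_zero]
  congr 1
  rw [ThetaMat, Finset.mul_sum]
  apply Finset.sum_congr rfl
  intro i _
  rw [pow_succ', mul_assoc Φ, mul_assoc Φ]

lemma theta_rec' (j : ℕ) :
    ThetaMat t Δ Φ (j + 1) = Φ ^ (j + 1) * Δ + ThetaMat t Δ Φ j * Φᵀ := by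
  rw [ThetaMat, Finset.sum_range_succ, add_comm]
  simp only [Nat.sub_self, pow_zero, Matrix.transpose_one, mul_one]
  congr 1
  rw [ThetaMat, Finset.sum_mul]
  apply Finset.sum_congr rfl
  intro i hi
  rw [Finset.mem_range] at hi
  have : j + 1 - i = (j - i) + 1 := by omega
  rw [this, pow_succ', Matrix.transpose_mul, ← mul_assoc]

lemma theta_big_zero (hΦ : ∀ i j : Fin t, i ≤ j → Φ i j = 0) {j : ℕ} (hj : 2 * t ≤ j + 1) :
    ThetaMat t Δ Φ j = 0 := by
  rw [ThetaMat]
  apply Finset.sum_eq_zero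
  intro i hi
  rw [Finset.mem_range] at hi
  rcases le_or_gt t i with h | h
  · rw [pow_zero_of_le hΦ h, zero_mul, zero_mul]
  · rw [pow_zero_of_le hΦ (show t ≤ j - i by omega), Matrix.transpose_zero, mul_zero]

lemma key1 : ∀ n : ℕ,
    ∑ j ∈ range (n + 1), κ (j + 1) • ThetaMat t Δ Φ j =
      ∑ j ∈ range (n + 1), κ (j + 1) • (Δ * (Φ ^ j)ᵀ) +
      ∑ j ∈ range n, κ (j + 2) • (Φ * ThetaMat t Δ Φ j) := by
  intro n
  induction n with
  | zero => simp [theta_zero]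
  | succ n ih =>
    rw [Finset.sum_range_succ, ih, Finset.sum_range_succ (fun j => κ (j + 1) • (Δ * (Φ ^ j)ᵀ)),
      Finset.sum_range_succ (fun j => κ (j + 2) • (Φ * ThetaMat t Δ Φ j)), theta_rec, smul_add]
    simp only [Finset.sum_range_succ]
    abel

lemma key2 : ∀ n : ℕ,
    ∑ j ∈ range (n + 1), κ (j + 1) • ThetaMat t Δ Φ j =
      ∑ j ∈ range (n + 1), κ (j + 1) • (Φ ^ j * Δ) +
      ∑ j ∈ range n, κ (j + 2) • (ThetaMat t Δ Φ j * Φᵀ) := by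
  intro n
  induction n with
  | zero => simp [theta_zero]
  | succ n ih =>
    rw [Finset.sum_range_succ, ih, Finset.sum_range_succ (fun j => κ (j + 1) • (Φ ^ j * Δ)),
      Finset.sum_range_succ (fun j => κ (j + 2) • (ThetaMat t Δ Φ j * Φᵀ)), theta_rec', smul_add]
    simp only [Finset.sum_range_succ]
    abel

end aux

/-- **The identity `L^{(1)} = Δ B + Φ Σ = Bᵀ Δ + Σ Φᵀ`** for symmetric `Δ` and strictly
lower-triangular `Φ`. -/
theorem LMatOne_eq (t : ℕ) (κ : ℕ → ℝ) (Δ Φ : Matrix (Fin t) (Fin t) ℝ)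
    (hΔ : Δᵀ = Δ) (hΦ : ∀ i j : Fin t, i ≤ j → Φ i j = 0) :
    LMatOne t κ Δ Φ = Δ * BMat t κ Φ + Φ * SigmaMat t κ Δ Φ ∧
    LMatOne t κ Δ Φ = (BMat t κ Φ)ᵀ * Δ + SigmaMat t κ Δ Φ * Φᵀ := by
  rcases Nat.eq_zero_or_pos t with ht | ht
  · subst ht
    constructor <;> · ext i j; exact i.elim0
  obtain ⟨n, hn⟩ : ∃ n, 2 * t = n + 1 := ⟨2 * t - 1, by omega⟩
  have hsub : range t ⊆ range (n + 1) := Finset.range_subset_range.mpr (by omega)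
  have hΘn : ThetaMat t Δ Φ n = 0 := theta_big_zero hΦ (by omega)
  have hSig : SigmaMat t κ Δ Φ = ∑ j ∈ range n, κ (j + 2) • ThetaMat t Δ Φ j := by
    rw [SigmaMat, hn, Finset.sum_range_succ, hΘn, smul_zero, add_zero]
  have hB1 : Δ * BMat t κ Φ = ∑ j ∈ range (n + 1), κ (j + 1) • (Δ * (Φ ^ j)ᵀ) := by
    rw [BMat, Matrix.transpose_sum, Finset.mul_sum]
    simp only [Matrix.transpose_smul, Matrix.mul_smul]
    apply Finset.sum_subset hsub
    intro j _ hj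
    rw [Finset.mem_range, not_lt] at hj
    rw [pow_zero_of_le hΦ hj, Matrix.transpose_zero, mul_zero, smul_zero]
  have hB2 : (BMat t κ Φ)ᵀ * Δ = ∑ j ∈ range (n + 1), κ (j + 1) • (Φ ^ j * Δ) := by
    rw [BMat, Matrix.transpose_transpose, Finset.sum_mul]
    simp only [Matrix.smul_mul]
    apply Finset.sum_subset hsub
    intro j _ hj
    rw [Finset.mem_range, not_lt] at hj
    rw [pow_zero_of_le hΦ hj, zero_mul, smul_zero]
  constructor
  · rw [LMatOne, hn, key1, hB1, hSig, Finset.mul_sum]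
    simp only [Matrix.mul_smul]
  · rw [LMatOne, hn, key2, hB2, hSig, Finset.sum_mul]
    simp only [Matrix.smul_mul]
end

section
/- In the setting of the previous statement, L^{(2)} := Σ_{j≥0} c_{2,j} Θ^{(j)}, where c_{2,j} = Σ_{m=0}^{j+1} κ_{m+1} κ_{j+1-m}, satisfies the identity L^{(2)} = B^T Δ B + B^T Φ Σ + Σ Φ^T B + Σ. -/
open Matrix Finset

/-- The coefficient `c_{2,j} = Σ_{m=0}^{j+1} κ_{m+1} κ_{j+1-m}` (with the convention
`κ_0 = 1` imposed as a hypothesis in the theorem below). -/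
noncomputable def cTwo (κ : ℕ → ℝ) (j : ℕ) : ℝ :=
  ∑ m ∈ range (j + 2), κ (m + 1) * κ (j + 1 - m)

/-- `L^{(2)} = Σ_{j≥0} c_{2,j} Θ^{(j)}`. -/
noncomputable def LMatTwo (t : ℕ) (κ : ℕ → ℝ) (Δ Φ : Matrix (Fin t) (Fin t) ℝ) :
    Matrix (Fin t) (Fin t) ℝ :=
  ∑ j ∈ range (2 * t), cTwo κ j • ThetaMat t Δ Φ j

noncomputable def Fmat (t : ℕ) (Δ Φ : Matrix (Fin t) (Fin t) ℝ) (i k : ℕ) :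
    Matrix (Fin t) (Fin t) ℝ :=
  Φ ^ i * Δ * (Φ ^ k)ᵀ

lemma pow_apply_eq_zero {t : ℕ} {Φ : Matrix (Fin t) (Fin t) ℝ}
    (hΦ : ∀ i j : Fin t, i ≤ j → Φ i j = 0) :
    ∀ (n : ℕ) (i j : Fin t), (i : ℕ) < n + (j : ℕ) → (Φ ^ n) i j = 0 := by
  intro n
  induction n with
  | zero =>
      intro i j h
      rw [pow_zero, one_apply_ne]
      intro e
      rw [e] at h
      omega
  | succ n ih =>
      intro i j h
      rw [pow_succ, mul_apply]
      apply Finset.sum_eq_zero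
      intro k _
      rcases le_or_gt k j with hk | hk
      · rw [hΦ k j hk, mul_zero]
      · rw [ih i k (by have := Fin.lt_iff_val_lt_val.mp hk; omega), zero_mul]

lemma pow_t_eq_zero {t : ℕ} {Φ : Matrix (Fin t) (Fin t) ℝ}
    (hΦ : ∀ i j : Fin t, i ≤ j → Φ i j = 0) : Φ ^ t = 0 := by
  ext i j
  rw [pow_apply_eq_zero hΦ t i j (by have := i.isLt; omega)]
  rfl

lemma Fmat_eq_zero {t : ℕ} {Δ Φ : Matrix (Fin t) (Fin t) ℝ} (hpow : Φ ^ t = 0) :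
    ∀ i k : ℕ, t ≤ i ∨ t ≤ k → Fmat t Δ Φ i k = 0 := by
  intro i k h
  rcases h with h | h
  · rw [Fmat, pow_eq_zero_of_le h hpow, zero_mul, zero_mul]
  · rw [Fmat, pow_eq_zero_of_le h hpow, transpose_zero, mul_zero]

lemma Fmat_shift_left {t : ℕ} {Δ Φ : Matrix (Fin t) (Fin t) ℝ} (a i k : ℕ) :
    Φ ^ a * Fmat t Δ Φ i k = Fmat t Δ Φ (a + i) k := by
  simp [Fmat, pow_add, mul_assoc]

lemma Fmat_shift_right {t : ℕ} {Δ Φ : Matrix (Fin t) (Fin t) ℝ} (b i k : ℕ) :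
    Fmat t Δ Φ i k * Φᵀ * (Φ ^ b)ᵀ = Fmat t Δ Φ i (b + 1 + k) := by
  have h : Φ ^ (b + 1 + k) = Φ ^ b * Φ * Φ ^ k := by
    rw [pow_add, pow_add, pow_one]
  rw [Fmat, Fmat, h, transpose_mul, transpose_mul]
  simp only [mul_assoc]

lemma sum_tri {M : Type*} [AddCommMonoid M] (n : ℕ) (f : ℕ → ℕ → M) :
    ∑ j ∈ range n, ∑ i ∈ range (j + 1), f i (j - i)
      = ∑ p ∈ (range n ×ˢ range n).filter (fun p => p.1 + p.2 < n), f p.1 p.2 := by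
  rw [Finset.sum_sigma']
  apply Finset.sum_nbij' (i := fun x => (x.2, x.1 - x.2))
    (j := fun p => ⟨p.1 + p.2, p.1⟩)
  · intro x hx
    simp only [Finset.mem_sigma, Finset.mem_range] at hx
    simp only [Finset.mem_filter, Finset.mem_product, Finset.mem_range]
    omega
  · intro p hp
    simp only [Finset.mem_filter, Finset.mem_product, Finset.mem_range] at hp
    simp only [Finset.mem_sigma, Finset.mem_range]
    omega
  · intro x hx
    obtain ⟨j, i⟩ := x
    simp only [Finset.mem_sigma, Finset.mem_range] at hx
    rw [show i + (j - i) = j by omega]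
  · intro p hp
    obtain ⟨a, b⟩ := p
    simp only [Finset.mem_filter, Finset.mem_product, Finset.mem_range] at hp
    show (a, a + b - a) = (a, b)
    rw [show a + b - a = b by omega]
  · intro x _
    rfl

lemma sum_grid {M : Type*} [AddCommMonoid M] (t : ℕ) (f : ℕ × ℕ → M)
    (hf : ∀ p : ℕ × ℕ, t ≤ p.1 ∨ t ≤ p.2 → f p = 0) :
    ∑ p ∈ (range (2 * t) ×ˢ range (2 * t)).filter (fun p => p.1 + p.2 < 2 * t), f p
      = ∑ p ∈ range t ×ˢ range t, f p := by
  refine (Finset.sum_subset ?_ ?_).symm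
  · intro p hp
    simp only [Finset.mem_product, Finset.mem_range] at hp
    simp only [Finset.mem_filter, Finset.mem_product, Finset.mem_range]
    omega
  · intro p hp hnp
    apply hf
    simp only [Finset.mem_filter, Finset.mem_product, Finset.mem_range] at hp
    simp only [Finset.mem_product, Finset.mem_range] at hnp
    omega

lemma theta_expand {t : ℕ} {Δ Φ : Matrix (Fin t) (Fin t) ℝ} (hpow : Φ ^ t = 0)
    (c : ℕ → ℝ) :
    ∑ j ∈ range (2 * t), c j • ThetaMat t Δ Φ j
      = ∑ p ∈ range t ×ˢ range t, c (p.1 + p.2) • Fmat t Δ Φ p.1 p.2 := by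
  have h1 : ∑ j ∈ range (2 * t), c j • ThetaMat t Δ Φ j
      = ∑ j ∈ range (2 * t), ∑ i ∈ range (j + 1),
          c (i + (j - i)) • Fmat t Δ Φ i (j - i) := by
    apply Finset.sum_congr rfl
    intro j _
    rw [ThetaMat, Finset.smul_sum]
    apply Finset.sum_congr rfl
    intro i hi
    simp only [Finset.mem_range] at hi
    rw [show i + (j - i) = j by omega]
    rfl
  refine h1.trans ((sum_tri (2 * t) fun i k => c (i + k) • Fmat t Δ Φ i k).trans
    (sum_grid t (fun p => c (p.1 + p.2) • Fmat t Δ Φ p.1 p.2) ?_))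
  intro p hp
  show c (p.1 + p.2) • Fmat t Δ Φ p.1 p.2 = 0
  rw [Fmat_eq_zero hpow p.1 p.2 hp, smul_zero]

lemma sum_shift {M : Type*} [AddCommMonoid M] [Module ℝ M] (t : ℕ) (E : ℕ → ℕ → M)
    (hE : ∀ i k, t ≤ i → E i k = 0) (c : ℕ → ℕ → ℕ → ℝ) :
    ∑ a ∈ range t, ∑ p ∈ range t ×ˢ range t, c a p.1 p.2 • E (a + 1 + p.1) p.2
      = ∑ q ∈ range t ×ˢ range t, ∑ m ∈ range q.1,
          c m (q.1 - 1 - m) q.2 • E q.1 q.2 := by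
  rw [← Finset.sum_product', Finset.sum_sigma']
  rw [← Finset.sum_filter_add_sum_filter_not (range t ×ˢ (range t ×ˢ range t))
    (fun x => x.1 + 1 + x.2.1 < t)]
  rw [Finset.sum_eq_zero (s := (range t ×ˢ (range t ×ˢ range t)).filter
      (fun x => ¬ x.1 + 1 + x.2.1 < t)) (by
    intro x hx
    simp only [Finset.mem_filter] at hx
    rw [hE _ _ (by omega), smul_zero]), add_zero]
  apply Finset.sum_nbij' (i := fun x => ⟨(x.1 + 1 + x.2.1, x.2.2), x.1⟩)
    (j := fun y => (y.2, (y.1.1 - 1 - y.2, y.1.2)))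
  · intro x hx
    simp only [Finset.mem_filter, Finset.mem_product, Finset.mem_range] at hx
    simp only [Finset.mem_sigma, Finset.mem_product, Finset.mem_range]
    omega
  · intro y hy
    simp only [Finset.mem_sigma, Finset.mem_product, Finset.mem_range] at hy
    simp only [Finset.mem_filter, Finset.mem_product, Finset.mem_range]
    omega
  · intro x hx
    obtain ⟨a, i0, k⟩ := x
    simp only [Finset.mem_filter, Finset.mem_product, Finset.mem_range] at hx
    show (a, (a + 1 + i0 - 1 - a, k)) = (a, (i0, k))
    rw [show a + 1 + i0 - 1 - a = i0 by omega]
  · intro y hy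
    obtain ⟨⟨q1, q2⟩, m⟩ := y
    simp only [Finset.mem_sigma, Finset.mem_product, Finset.mem_range] at hy
    show (⟨(m + 1 + (q1 - 1 - m), q2), m⟩ : (_ : ℕ × ℕ) × ℕ) = ⟨(q1, q2), m⟩
    rw [show m + 1 + (q1 - 1 - m) = q1 by omega]
  · intro x hx
    obtain ⟨a, i0, k⟩ := x
    simp only [Finset.mem_filter, Finset.mem_product, Finset.mem_range] at hx
    show c a i0 k • E (a + 1 + i0) k
      = c a (a + 1 + i0 - 1 - a) k • E (a + 1 + i0) k
    rw [show a + 1 + i0 - 1 - a = i0 by omega]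

lemma sum_shift' {M : Type*} [AddCommMonoid M] [Module ℝ M] (t : ℕ) (E : ℕ → ℕ → M)
    (hE : ∀ i k, t ≤ k → E i k = 0) (c : ℕ → ℕ → ℕ → ℝ) :
    ∑ b ∈ range t, ∑ p ∈ range t ×ˢ range t, c b p.1 p.2 • E p.1 (b + 1 + p.2)
      = ∑ q ∈ range t ×ˢ range t, ∑ m ∈ range q.2,
          c m q.1 (q.2 - 1 - m) • E q.1 q.2 := by
  rw [← Finset.sum_product', Finset.sum_sigma']
  rw [← Finset.sum_filter_add_sum_filter_not (range t ×ˢ (range t ×ˢ range t))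
    (fun x => x.1 + 1 + x.2.2 < t)]
  rw [Finset.sum_eq_zero (s := (range t ×ˢ (range t ×ˢ range t)).filter
      (fun x => ¬ x.1 + 1 + x.2.2 < t)) (by
    intro x hx
    simp only [Finset.mem_filter] at hx
    rw [hE _ _ (by omega), smul_zero]), add_zero]
  apply Finset.sum_nbij' (i := fun x => ⟨(x.2.1, x.1 + 1 + x.2.2), x.1⟩)
    (j := fun y => (y.2, (y.1.1, y.1.2 - 1 - y.2)))
  · intro x hx
    simp only [Finset.mem_filter, Finset.mem_product, Finset.mem_range] at hx
    simp only [Finset.mem_sigma, Finset.mem_product, Finset.mem_range]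
    omega
  · intro y hy
    simp only [Finset.mem_sigma, Finset.mem_product, Finset.mem_range] at hy
    simp only [Finset.mem_filter, Finset.mem_product, Finset.mem_range]
    omega
  · intro x hx
    obtain ⟨b, i0, k⟩ := x
    simp only [Finset.mem_filter, Finset.mem_product, Finset.mem_range] at hx
    show (b, (i0, b + 1 + k - 1 - b)) = (b, (i0, k))
    rw [show b + 1 + k - 1 - b = k by omega]
  · intro y hy
    obtain ⟨⟨q1, q2⟩, m⟩ := y
    simp only [Finset.mem_sigma, Finset.mem_product, Finset.mem_range] at hy
    show (⟨(q1, m + 1 + (q2 - 1 - m)), m⟩ : (_ : ℕ × ℕ) × ℕ) = ⟨(q1, q2), m⟩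
    rw [show m + 1 + (q2 - 1 - m) = q2 by omega]
  · intro x hx
    obtain ⟨b, i0, k⟩ := x
    simp only [Finset.mem_filter, Finset.mem_product, Finset.mem_range] at hx
    show c b i0 k • E i0 (b + 1 + k)
      = c b i0 (b + 1 + k - 1 - b) • E i0 (b + 1 + k)
    rw [show b + 1 + k - 1 - b = k by omega]

lemma cTwo_split (κ : ℕ → ℝ) (hκ0 : κ 0 = 1) (i k : ℕ) :
    cTwo κ (i + k)
      = κ (i + 1) * κ (k + 1)
        + (∑ m ∈ range i, κ (m + 1) * κ (i + k + 1 - m))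
        + (∑ m ∈ range k, κ (m + 1) * κ (i + k + 1 - m))
        + κ (i + k + 2) := by
  rw [cTwo, Finset.sum_range_succ]
  rw [show i + k + 1 - (i + k + 1) = 0 by omega, hκ0, mul_one]
  congr 1
  have hsplit : ∑ m ∈ range (i + k + 1), κ (m + 1) * κ (i + k + 1 - m)
      = (∑ m ∈ range (i + 1), κ (m + 1) * κ (i + k + 1 - m))
        + ∑ m ∈ Ico (i + 1) (i + k + 1), κ (m + 1) * κ (i + k + 1 - m) := by
    simp only [Finset.range_eq_Ico]
    exact (Finset.sum_Ico_consecutive _ (Nat.zero_le _) (by omega)).symm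
  rw [hsplit, Finset.sum_range_succ]
  rw [show i + k + 1 - i = k + 1 by omega]
  have hIco : ∑ m ∈ Ico (i + 1) (i + k + 1), κ (m + 1) * κ (i + k + 1 - m)
      = ∑ m ∈ range k, κ (m + 1) * κ (i + k + 1 - m) := by
    rw [Finset.sum_Ico_eq_sum_range]
    rw [show i + k + 1 - (i + 1) = k by omega]
    rw [← Finset.sum_range_reflect (fun m => κ (m + 1) * κ (i + k + 1 - m)) k]
    apply Finset.sum_congr rfl
    intro m hm
    simp only [Finset.mem_range] at hm
    show κ (i + 1 + m + 1) * κ (i + k + 1 - (i + 1 + m))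
      = κ (k - 1 - m + 1) * κ (i + k + 1 - (k - 1 - m))
    rw [mul_comm, show i + 1 + m + 1 = i + k + 1 - (k - 1 - m) by omega,
      show i + k + 1 - (i + 1 + m) = k - 1 - m + 1 by omega]
  rw [hIco]
  ring

/-- **The identity `L^{(2)} = Bᵀ Δ B + Bᵀ Φ Σ + Σ Φᵀ B + Σ`** for symmetric `Δ` and strictly
lower-triangular `Φ`, with the convention `κ_0 = 1`. -/
theorem LMatTwo_eq (t : ℕ) (κ : ℕ → ℝ) (hκ0 : κ 0 = 1)
    (Δ Φ : Matrix (Fin t) (Fin t) ℝ)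
    (hΔ : Δᵀ = Δ) (hΦ : ∀ i j : Fin t, i ≤ j → Φ i j = 0) :
    LMatTwo t κ Δ Φ =
      (BMat t κ Φ)ᵀ * Δ * BMat t κ Φ + (BMat t κ Φ)ᵀ * Φ * SigmaMat t κ Δ Φ
        + SigmaMat t κ Δ Φ * Φᵀ * BMat t κ Φ + SigmaMat t κ Δ Φ := by
  have hpow : Φ ^ t = 0 := pow_t_eq_zero hΦ
  have hF := Fmat_eq_zero (Δ := Δ) hpow
  have hSig : SigmaMat t κ Δ Φ
      = ∑ p ∈ range t ×ˢ range t, κ (p.1 + p.2 + 2) • Fmat t Δ Φ p.1 p.2 :=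
    theta_expand hpow (fun j => κ (j + 2))
  have hL : LMatTwo t κ Δ Φ
      = ∑ p ∈ range t ×ˢ range t, cTwo κ (p.1 + p.2) • Fmat t Δ Φ p.1 p.2 :=
    theta_expand hpow (cTwo κ)
  have hBT : (BMat t κ Φ)ᵀ = ∑ a ∈ range t, κ (a + 1) • Φ ^ a := by
    rw [BMat, transpose_transpose]
  have hB : BMat t κ Φ = ∑ b ∈ range t, κ (b + 1) • (Φ ^ b)ᵀ := by
    rw [BMat, transpose_sum]
    simp [transpose_smul]
  -- term 1 : Bᵀ Δ B
  have h1 : (BMat t κ Φ)ᵀ * Δ * BMat t κ Φ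
      = ∑ p ∈ range t ×ˢ range t,
          (κ (p.1 + 1) * κ (p.2 + 1)) • Fmat t Δ Φ p.1 p.2 := by
    rw [hBT, hB, Finset.sum_mul, Finset.sum_mul]
    have step : ∀ a ∈ range t,
        κ (a + 1) • Φ ^ a * Δ * (∑ b ∈ range t, κ (b + 1) • (Φ ^ b)ᵀ)
          = ∑ b ∈ range t, (κ (a + 1) * κ (b + 1)) • Fmat t Δ Φ a b := by
      intro a _
      rw [Finset.mul_sum]
      apply Finset.sum_congr rfl
      intro b _
      rw [Fmat, smul_mul_assoc, smul_mul_assoc, mul_smul_comm, smul_smul]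
    rw [Finset.sum_congr rfl step]
    rw [← Finset.sum_product']
  -- term 2 : Bᵀ Φ Σ
  have h2 : (BMat t κ Φ)ᵀ * Φ * SigmaMat t κ Δ Φ
      = ∑ q ∈ range t ×ˢ range t,
          (∑ m ∈ range q.1, κ (m + 1) * κ (q.1 + q.2 + 1 - m))
            • Fmat t Δ Φ q.1 q.2 := by
    have e1 : (BMat t κ Φ)ᵀ * Φ = ∑ a ∈ range t, κ (a + 1) • Φ ^ (a + 1) := by
      rw [hBT, Finset.sum_mul]
      simp_rw [smul_mul_assoc, ← pow_succ]
    have e2 : (BMat t κ Φ)ᵀ * Φ * SigmaMat t κ Δ Φ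
        = ∑ a ∈ range t, ∑ p ∈ range t ×ˢ range t,
            (κ (a + 1) * κ (p.1 + p.2 + 2)) • Fmat t Δ Φ (a + 1 + p.1) p.2 := by
      rw [e1, hSig, Finset.sum_mul]
      apply Finset.sum_congr rfl
      intro a _
      rw [Finset.mul_sum]
      apply Finset.sum_congr rfl
      intro p _
      rw [smul_mul_assoc, mul_smul_comm, smul_smul, Fmat_shift_left]
    refine e2.trans ((sum_shift t (Fmat t Δ Φ) (fun i k h => hF i k (Or.inl h))
      (fun a i k => κ (a + 1) * κ (i + k + 2))).trans ?_)
    apply Finset.sum_congr rfl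
    intro q _
    rw [← Finset.sum_smul]
    congr 1
    apply Finset.sum_congr rfl
    intro m hm
    simp only [Finset.mem_range] at hm
    show κ (m + 1) * κ (q.1 - 1 - m + q.2 + 2) = κ (m + 1) * κ (q.1 + q.2 + 1 - m)
    rw [show q.1 - 1 - m + q.2 + 2 = q.1 + q.2 + 1 - m by omega]
  -- term 3 : Σ Φᵀ B
  have h3 : SigmaMat t κ Δ Φ * Φᵀ * BMat t κ Φ
      = ∑ q ∈ range t ×ˢ range t,
          (∑ m ∈ range q.2, κ (m + 1) * κ (q.1 + q.2 + 1 - m))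
            • Fmat t Δ Φ q.1 q.2 := by
    have e3 : SigmaMat t κ Δ Φ * Φᵀ * BMat t κ Φ
        = ∑ b ∈ range t, ∑ p ∈ range t ×ˢ range t,
            (κ (b + 1) * κ (p.1 + p.2 + 2)) • Fmat t Δ Φ p.1 (b + 1 + p.2) := by
      rw [hSig, hB, Finset.sum_mul, Finset.sum_mul]
      have step : ∀ p ∈ range t ×ˢ range t,
          κ (p.1 + p.2 + 2) • Fmat t Δ Φ p.1 p.2 * Φᵀ
              * (∑ b ∈ range t, κ (b + 1) • (Φ ^ b)ᵀ)
            = ∑ b ∈ range t,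
                (κ (b + 1) * κ (p.1 + p.2 + 2)) • Fmat t Δ Φ p.1 (b + 1 + p.2) := by
        intro p _
        rw [Finset.mul_sum]
        apply Finset.sum_congr rfl
        intro b _
        rw [smul_mul_assoc, smul_mul_assoc, mul_smul_comm, smul_smul,
          Fmat_shift_right, mul_comm (κ (p.1 + p.2 + 2)) (κ (b + 1))]
      rw [Finset.sum_congr rfl step]
      exact Finset.sum_comm
    refine e3.trans ((sum_shift' t (Fmat t Δ Φ) (fun i k h => hF i k (Or.inr h))
      (fun b i k => κ (b + 1) * κ (i + k + 2))).trans ?_)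
    apply Finset.sum_congr rfl
    intro q _
    rw [← Finset.sum_smul]
    congr 1
    apply Finset.sum_congr rfl
    intro m hm
    simp only [Finset.mem_range] at hm
    show κ (m + 1) * κ (q.1 + (q.2 - 1 - m) + 2) = κ (m + 1) * κ (q.1 + q.2 + 1 - m)
    rw [show q.1 + (q.2 - 1 - m) + 2 = q.1 + q.2 + 1 - m by omega]
  rw [hL, h1, h2, h3, hSig, ← Finset.sum_add_distrib, ← Finset.sum_add_distrib,
    ← Finset.sum_add_distrib]
  apply Finset.sum_congr rfl
  intro p _
  rw [← add_smul, ← add_smul, ← add_smul, cTwo_split κ hκ0 p.1 p.2]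
end
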